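/- In the Benes network B(r) (r ≥ 3), every vertex on level 0, level r, or level 2r is a twin vertex; hence β'(B(r)) ≥ 3·2^r. -/

import Mathlib

/-!
Two twins `u, v` are at the same distance from every third vertex, so a resolving set that
contains neither cannot separate them, and one that contains only `v` stops doing so once `v`
fails. Hence every fault-tolerant resolving set contains all twin vertices. In `B(r)` every edge
at a vertex of level `0` or `2r` changes at most the first bit, and every edge at a vertex of
level `r` at most the `r`-th bit; flipping that bit therefore yields a twin with the same open
neighbourhood. These three levels hold `3 · 2^r` vertices. Since no vertex of `B(r)` is isolated,
the whole vertex set is a fault-tolerant resolving set, so the infimum defining `ftmd` is attained.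
-/

open SimpleGraph

variable {V : Type*}

/-- `S` is a resolving set of `G`. -/
def ResSet (G : SimpleGraph V) (S : Set V) : Prop :=
  ∀ x y : V, x ≠ y → ∃ w ∈ S, G.dist x w ≠ G.dist y w

/-- `S` is a fault-tolerant resolving set of `G`. -/
def FTResSet (G : SimpleGraph V) (S : Set V) : Prop :=
  ResSet G S ∧ ∀ x ∈ S, ResSet G (S \ {x})

/-- Metric dimension. -/
noncomputable def md (G : SimpleGraph V) : ℕ :=
  sInf {n | ∃ S : Set V, S.ncard = n ∧ ResSet G S}

/-- Fault-tolerant metric dimension. -/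
noncomputable def ftmd (G : SimpleGraph V) : ℕ :=
  sInf {n | ∃ S : Set V, S.ncard = n ∧ FTResSet G S}

/-- `u` and `v` are twins: distinct and with equal open or equal closed neighborhoods. -/
def IsTwinPair (G : SimpleGraph V) (u v : V) : Prop :=
  u ≠ v ∧ (G.neighborSet u = G.neighborSet v ∨
    G.neighborSet u ∪ {u} = G.neighborSet v ∪ {v})

/-- `u` is a twin vertex. -/
def IsTwin (G : SimpleGraph V) (u : V) : Prop := ∃ v, IsTwinPair G u v

/-- Adjacency in the Benes network `B(r)`: `(s,j) ~ (s',j+1)` iff `s = s'` or they differ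
exactly in bit `j+1` (when `j ≤ r-1`) resp. bit `2r-j` (when `j ≥ r`); bit `b` is index `b-1`. -/
def BenesAdj (r : ℕ) (u v : (Fin r → Bool) × Fin (2 * r + 1)) : Prop :=
  ∃ j : ℕ, ((u.2.val = j ∧ v.2.val = j + 1) ∨ (v.2.val = j ∧ u.2.val = j + 1)) ∧
    (u.1 = v.1 ∨ ∃ k : Fin r, k.val + 1 = (if j < r then j + 1 else 2 * r - j) ∧
      u.1 k ≠ v.1 k ∧ ∀ i : Fin r, i ≠ k → u.1 i = v.1 i)

/-- The `r`-dimensional Benes network `B(r)`. -/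
def Benes (r : ℕ) : SimpleGraph ((Fin r → Bool) × Fin (2 * r + 1)) where
  Adj u v := BenesAdj r u v
  symm := by
    constructor
    rintro u v ⟨j, h1, h2⟩
    refine ⟨j, h1.symm, ?_⟩
    rcases h2 with h | ⟨k, hk, hne, hall⟩
    · exact Or.inl h.symm
    · exact Or.inr ⟨k, hk, hne.symm, fun i hi => (hall i hi).symm⟩
  loopless := by
    constructor
    rintro u ⟨j, h1 | h1, -⟩ <;> omega

variable {G : SimpleGraph V}

section Twins

variable {u v w : V}

lemma IsTwinPair.symm (h : IsTwinPair G u v) : IsTwinPair G v u :=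
  ⟨h.1.symm, h.2.imp Eq.symm Eq.symm⟩

lemma IsTwinPair.adj_imp (h : IsTwinPair G u v) (x : V) (hx : G.Adj u x) :
    x = v ∨ G.Adj v x := by
  rcases h.2 with he | he
  · exact Or.inr (he ▸ hx : x ∈ G.neighborSet v)
  · have : x ∈ G.neighborSet v ∪ {v} := he ▸ Or.inl hx
    exact this.symm

lemma exists_walk_length_le_of_adj_imp (hN : ∀ x, G.Adj u x → x = v ∨ G.Adj v x)
    (p : G.Walk u w) (hw : w ≠ u) : ∃ q : G.Walk v w, q.length ≤ p.length := by
  cases p with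
  | nil => exact absurd rfl hw
  | cons ha q =>
    rcases hN _ ha with rfl | hv
    · exact ⟨q, by simp⟩
    · exact ⟨.cons hv q, by simp⟩

lemma reachable_of_adj_imp (hN : ∀ x, G.Adj u x → x = v ∨ G.Adj v x) (hw : w ≠ u)
    (huw : G.Reachable u w) : G.Reachable v w :=
  huw.elim fun p => (exists_walk_length_le_of_adj_imp hN p hw).choose.reachable

lemma dist_le_of_adj_imp (hN : ∀ x, G.Adj u x → x = v ∨ G.Adj v x) (hw : w ≠ u)
    (huw : G.Reachable u w) : G.dist v w ≤ G.dist u w := by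
  obtain ⟨p, hp⟩ := huw.exists_walk_length_eq_dist
  obtain ⟨q, hq⟩ := exists_walk_length_le_of_adj_imp hN p hw
  exact hp ▸ (dist_le q).trans hq

lemma IsTwinPair.dist_eq (h : IsTwinPair G u v) (hwu : w ≠ u) (hwv : w ≠ v) :
    G.dist u w = G.dist v w := by
  by_cases huw : G.Reachable u w
  · have hvw := reachable_of_adj_imp h.adj_imp hwu huw
    exact le_antisymm (dist_le_of_adj_imp h.symm.adj_imp hwv hvw)
      (dist_le_of_adj_imp h.adj_imp hwu huw)
  · have hvw : ¬ G.Reachable v w := fun hvw => huw (reachable_of_adj_imp h.symm.adj_imp hwv hvw)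
    rw [dist_eq_zero_of_not_reachable huw, dist_eq_zero_of_not_reachable hvw]

lemma IsTwinPair.left_mem_of_ftResSet (h : IsTwinPair G u v) {S : Set V} (hS : FTResSet G S) :
    u ∈ S := by
  by_contra hu
  by_cases hv : v ∈ S
  · obtain ⟨w, ⟨hwS, hwv⟩, hd⟩ := hS.2 v hv u v h.1
    exact hd (h.dist_eq (fun e => hu (e ▸ hwS)) hwv)
  · obtain ⟨w, hwS, hd⟩ := hS.1 u v h.1
    exact hd (h.dist_eq (fun e => hu (e ▸ hwS)) (fun e => hv (e ▸ hwS)))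

end Twins

section FaultTolerant

lemma ResSet.mono {S T : Set V} (hS : ResSet G S) (hST : S ⊆ T) : ResSet G T :=
  fun x y hxy => (hS x y hxy).imp fun _ hw => ⟨hST hw.1, hw.2⟩

lemma resSet_compl_singleton (hG : ∀ x, ∃ y, G.Adj x y) (z : V) : ResSet G {z}ᶜ := by
  intro x y hxy
  by_cases hxy' : G.Reachable x y
  · by_cases hxz : x = z
    · refine ⟨y, fun hyz => hxy (hxz.trans hyz.symm), ?_⟩
      simpa using (hxy'.pos_dist_of_ne hxy).ne'
    · exact ⟨x, hxz, by simpa using (hxy'.symm.pos_dist_of_ne hxy.symm).ne⟩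
  -- a neighbour `a ≠ z` of `x` is at distance 1 from `x` and unreachable from `y`
  have key : ∀ x y : V, ¬ G.Reachable x y → ∀ a, G.Adj x a → a ≠ z →
      ∃ w ∈ ({z}ᶜ : Set V), G.dist x w ≠ G.dist y w := fun x y hxy a ha haz =>
    ⟨a, haz, by
      rw [dist_eq_one_iff_adj.mpr ha,
        dist_eq_zero_of_not_reachable fun hya => hxy (ha.reachable.trans hya.symm)]
      exact one_ne_zero⟩
  obtain ⟨a, ha⟩ := hG x
  obtain ⟨b, hb⟩ := hG y
  by_cases haz : a = z
  · by_cases hbz : b = z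
    · exact absurd (ha.reachable.trans (haz ▸ hbz ▸ hb.reachable.symm)) hxy'
    · obtain ⟨w, hw, hd⟩ := key y x (fun h => hxy' h.symm) b hb hbz
      exact ⟨w, hw, hd.symm⟩
  · exact key x y hxy' a ha haz

lemma ftResSet_univ (hG : ∀ x, ∃ y, G.Adj x y) : FTResSet G Set.univ :=
  ⟨fun x y hxy => (resSet_compl_singleton hG x).mono (Set.subset_univ _) x y hxy,
    fun x _ => Set.compl_eq_univ_sdiff {x} ▸ resSet_compl_singleton hG x⟩

lemma ncard_setOf_isTwin_le_ftmd [Finite V] (hG : ∀ x, ∃ y, G.Adj x y) :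
    {v | IsTwin G v}.ncard ≤ ftmd G :=
  le_csInf ⟨_, Set.univ, rfl, ftResSet_univ hG⟩ fun _ ⟨S, hS, hFT⟩ =>
    hS ▸ Set.ncard_le_ncard (fun _ ⟨_, h⟩ => h.left_mem_of_ftResSet hFT) (Set.toFinite S)

end FaultTolerant

section Benes

lemma eq_or_ne_only_at_iff {ι β : Type*} {s t : ι → β} (k : ι) :
    (s = t ∨ (s k ≠ t k ∧ ∀ i, i ≠ k → s i = t i)) ↔ ∀ i, i ≠ k → s i = t i := by
  refine ⟨by rintro (rfl | ⟨-, h⟩) <;> simp_all, fun h => ?_⟩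
  by_cases hk : s k = t k
  · refine Or.inl (funext fun i => ?_)
    by_cases hi : i = k
    · exact hi ▸ hk
    · exact h i hi
  · exact Or.inr ⟨hk, h⟩

/-- Both edge layers of `B(r)` at level `j0` (those reaching level `j0 - 1` and `j0 + 1`) act on
the bit with index `k`. -/
def BenesLevelBit (r : ℕ) (j0 : Fin (2 * r + 1)) (k : Fin r) : Prop :=
  ∀ j : ℕ, (j0.val = j ∧ j < 2 * r ∨ j0.val = j + 1) →
    (if j < r then j + 1 else 2 * r - j) = k.val + 1

variable {r : ℕ} {s : Fin r → Bool} {j0 : Fin (2 * r + 1)} {k : Fin r}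

lemma benes_adj_iff_of_bit
    (hbit : BenesLevelBit r j0 k)
    (v : (Fin r → Bool) × Fin (2 * r + 1)) :
    (Benes r).Adj (s, j0) v ↔
      (j0.val + 1 = v.2.val ∨ v.2.val + 1 = j0.val) ∧ ∀ i, i ≠ k → s i = v.1 i := by
  have hv := v.2.isLt
  constructor
  · rintro ⟨j, hj, hs⟩
    have hb := hbit j (by dsimp only at hj; omega)
    refine ⟨by dsimp only at hj; omega, (eq_or_ne_only_at_iff k).1 ?_⟩
    rcases hs with hs | ⟨k', hk', hs⟩
    · exact Or.inl hs
    · obtain rfl : k' = k := Fin.ext (by omega)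
      exact Or.inr hs
  · rintro ⟨hlev, hs⟩
    have hs' := (eq_or_ne_only_at_iff k).2 hs
    obtain ⟨j, hj⟩ : ∃ j, (j0.val = j ∧ v.2.val = j + 1) ∨ (v.2.val = j ∧ j0.val = j + 1) := by
      rcases hlev with h | h
      · exact ⟨j0.val, Or.inl ⟨rfl, h.symm⟩⟩
      · exact ⟨v.2.val, Or.inr ⟨rfl, h.symm⟩⟩
    have hb := hbit j (by omega)
    exact ⟨j, hj, hs'.imp_right fun h => ⟨k, hb.symm, h⟩⟩

lemma benes_neighborSet_update
    (hbit : BenesLevelBit r j0 k) (c : Bool) :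
    (Benes r).neighborSet (Function.update s k c, j0) = (Benes r).neighborSet (s, j0) := by
  ext v
  simp only [mem_neighborSet, benes_adj_iff_of_bit hbit]
  exact and_congr_right fun _ => forall₂_congr fun i hi => by rw [Function.update_of_ne hi]

lemma isTwinPair_benes_update
    (hbit : BenesLevelBit r j0 k) :
    IsTwinPair (Benes r) (s, j0) (Function.update s k (!s k), j0) :=
  ⟨fun h => by simpa using congrFun (congrArg Prod.fst h) k,
    Or.inl (benes_neighborSet_update hbit _).symm⟩

lemma isTwin_benes_of_level (hr : 0 < r) (v : (Fin r → Bool) × Fin (2 * r + 1))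
    (hv : v.2.val = 0 ∨ v.2.val = r ∨ v.2.val = 2 * r) : IsTwin (Benes r) v := by
  obtain ⟨s, j0⟩ := v
  obtain ⟨k, hbit⟩ : ∃ k, BenesLevelBit r j0 k := by
    dsimp only at hv
    rcases hv with h | h | h
    · exact ⟨⟨0, hr⟩, fun j hj => by dsimp only; split_ifs <;> omega⟩
    · exact ⟨⟨r - 1, by omega⟩, fun j hj => by dsimp only; split_ifs <;> omega⟩
    · exact ⟨⟨0, hr⟩, fun j hj => by dsimp only; split_ifs <;> omega⟩
  exact ⟨_, isTwinPair_benes_update hbit⟩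

lemma benes_exists_adj (hr : 0 < r) (v : (Fin r → Bool) × Fin (2 * r + 1)) :
    ∃ w, (Benes r).Adj v w := by
  obtain ⟨s, j0⟩ := v
  have := j0.isLt
  by_cases h : j0.val < 2 * r
  · exact ⟨(s, ⟨j0.val + 1, by omega⟩), j0.val, Or.inl ⟨rfl, rfl⟩, Or.inl rfl⟩
  · exact ⟨(s, ⟨2 * r - 1, by omega⟩), 2 * r - 1, Or.inr ⟨rfl, by dsimp only; omega⟩, Or.inl rfl⟩

lemma ncard_benes_levels (hr : 0 < r) :
    {v : (Fin r → Bool) × Fin (2 * r + 1) |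
      v.2.val = 0 ∨ v.2.val = r ∨ v.2.val = 2 * r}.ncard = 3 * 2 ^ r := by
  have hlev : {i : Fin (2 * r + 1) | i.val = 0 ∨ i.val = r ∨ i.val = 2 * r}.ncard = 3 :=
    Set.ncard_eq_three.2 ⟨⟨0, by omega⟩, ⟨r, by omega⟩, ⟨2 * r, by omega⟩,
      by simp only [Ne, Fin.ext_iff]; omega, by simp only [Ne, Fin.ext_iff]; omega,
      by simp only [Ne, Fin.ext_iff]; omega, by
        ext i
        simp only [Set.mem_ofPred_eq, Set.mem_insert_iff, Set.mem_singleton_iff, Fin.ext_iff]⟩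
  have hprod : {v : (Fin r → Bool) × Fin (2 * r + 1) |
      v.2.val = 0 ∨ v.2.val = r ∨ v.2.val = 2 * r} =
      Set.univ ×ˢ {i : Fin (2 * r + 1) | i.val = 0 ∨ i.val = r ∨ i.val = 2 * r} := by
    ext; simp
  rw [hprod, Set.ncard_prod, hlev, Set.ncard_univ, Nat.card_eq_fintype_card, Fintype.card_fun,
    Fintype.card_bool, Fintype.card_fin, mul_comm]

end Benes

theorem benes_twins_and_lower_bound (r : ℕ) (hr : 3 ≤ r) :
    (∀ v : (Fin r → Bool) × Fin (2 * r + 1),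
      (v.2.val = 0 ∨ v.2.val = r ∨ v.2.val = 2 * r) → IsTwin (Benes r) v) ∧
    3 * 2 ^ r ≤ ftmd (Benes r) := by
  have hr0 : 0 < r := by omega
  refine ⟨isTwin_benes_of_level hr0, ?_⟩
  calc 3 * 2 ^ r
      = {v : (Fin r → Bool) × Fin (2 * r + 1) |
          v.2.val = 0 ∨ v.2.val = r ∨ v.2.val = 2 * r}.ncard := (ncard_benes_levels hr0).symm
    _ ≤ {v | IsTwin (Benes r) v}.ncard :=
        Set.ncard_le_ncard (isTwin_benes_of_level hr0) (Set.toFinite _)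
    _ ≤ ftmd (Benes r) := ncard_setOf_isTwin_le_ftmd (benes_exists_adj hr0)
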